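/- arXiv:1807.00739 — 5 statements merged into one kernel-verified Lean document; each statement's English description precedes it below -/
import Mathlib

section
/- For all x ≥ 0 and y ≥ 0, one has x^{5/2} + (5/2) x^{3/2} y - (x+y)^{5/2} ≥ - (15/8) x^{1/2} y^2 - y^{5/2}. -/
/-!
Put `x = a²`, `y = b²` with `a, b ≥ 0`. The claim becomes
`(a² + b²)^{5/2} ≤ a⁵ + (5/2) a³ b² + (15/8) a b⁴ + b⁵`, and since both sides are nonnegative it
suffices to compare squares. The square of the right-hand side exceeds `(a² + b²)⁵` by
`a b⁵ (2a⁴ - (5/8) a³ b + 5 a² b² - (95/64) a b³ + (15/4) b⁴)`, and the quartic factor is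
`a² q₁(a, b) + b² q₂(a, b)` with positive definite quadratic forms `q₁, q₂`.
-/

lemma sq_rpow_div_two {a : ℝ} (ha : 0 ≤ a) (r : ℝ) : (a ^ 2) ^ (r / 2) = a ^ r := by
  rw [← Real.rpow_natCast, ← Real.rpow_mul ha]
  ring_nf

lemma quartic_nonneg (a b : ℝ) :
    0 ≤ 2 * a ^ 4 - 5 / 8 * a ^ 3 * b + 5 * a ^ 2 * b ^ 2 - 95 / 64 * a * b ^ 3 + 15 / 4 * b ^ 4 := by
  nlinarith [sq_nonneg (a * (a - b / 8)), sq_nonneg (b * (a - b / 2)), sq_nonneg (a * b),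
    sq_nonneg (a ^ 2), sq_nonneg (b ^ 2)]

lemma sq_add_sq_pow_five_le {a b : ℝ} (ha : 0 ≤ a) (hb : 0 ≤ b) :
    (a ^ 2 + b ^ 2) ^ 5 ≤ (a ^ 5 + 5 / 2 * a ^ 3 * b ^ 2 + 15 / 8 * a * b ^ 4 + b ^ 5) ^ 2 := by
  have hgap : (a ^ 5 + 5 / 2 * a ^ 3 * b ^ 2 + 15 / 8 * a * b ^ 4 + b ^ 5) ^ 2 - (a ^ 2 + b ^ 2) ^ 5
      = a * b ^ 5 *
        (2 * a ^ 4 - 5 / 8 * a ^ 3 * b + 5 * a ^ 2 * b ^ 2 - 95 / 64 * a * b ^ 3 + 15 / 4 * b ^ 4) := by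
    ring
  have := mul_nonneg (mul_nonneg ha (pow_nonneg hb 5)) (quartic_nonneg a b)
  linarith

lemma sq_add_sq_rpow_five_halves_le {a b : ℝ} (ha : 0 ≤ a) (hb : 0 ≤ b) :
    (a ^ 2 + b ^ 2) ^ ((5 : ℝ) / 2) ≤ a ^ 5 + 5 / 2 * a ^ 3 * b ^ 2 + 15 / 8 * a * b ^ 4 + b ^ 5 :=
  calc (a ^ 2 + b ^ 2) ^ ((5 : ℝ) / 2)
      = √((a ^ 2 + b ^ 2) ^ 5) := by
        rw [Real.sqrt_eq_rpow, ← Real.rpow_natCast _ 5, ← Real.rpow_mul (by positivity)]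
        norm_num
    _ ≤ √((a ^ 5 + 5 / 2 * a ^ 3 * b ^ 2 + 15 / 8 * a * b ^ 4 + b ^ 5) ^ 2) :=
        Real.sqrt_le_sqrt (sq_add_sq_pow_five_le ha hb)
    _ = a ^ 5 + 5 / 2 * a ^ 3 * b ^ 2 + 15 / 8 * a * b ^ 4 + b ^ 5 :=
        Real.sqrt_sq (by positivity)

/-- For `x, y ≥ 0`, `x^{5/2} + (5/2) x^{3/2} y - (x+y)^{5/2} ≥ -(15/8) x^{1/2} y² - y^{5/2}`. -/
theorem stmt1 (x y : ℝ) (hx : 0 ≤ x) (hy : 0 ≤ y) :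
    -((15 / 8) * x ^ ((1 : ℝ) / 2) * y ^ 2) - y ^ ((5 : ℝ) / 2) ≤
      x ^ ((5 : ℝ) / 2) + (5 / 2) * x ^ ((3 : ℝ) / 2) * y - (x + y) ^ ((5 : ℝ) / 2) := by
  obtain ⟨a, ha, rfl⟩ : ∃ a, 0 ≤ a ∧ a ^ 2 = x := ⟨√x, Real.sqrt_nonneg x, Real.sq_sqrt hx⟩
  obtain ⟨b, hb, rfl⟩ : ∃ b, 0 ≤ b ∧ b ^ 2 = y := ⟨√y, Real.sqrt_nonneg y, Real.sq_sqrt hy⟩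
  have hbound := sq_add_sq_rpow_five_halves_le ha hb
  simp only [sq_rpow_div_two ha, sq_rpow_div_two hb, Real.rpow_one, Real.rpow_ofNat]
  linear_combination hbound
end

section
/- Let P be an orthogonal projection on a Hilbert space and let Q be a self-adjoint operator satisfying -P ≤ Q ≤ 1 - P. Then (Q+P)² ≤ Q + P, and consequently Q² ≤ P⊥QP⊥ - PQP, where P⊥ = 1 - P. -/
/-! Put `A = Q + P`, so that the hypotheses say `0 ≤ A ≤ 1`. Then
`A - A² = A (1 - A) A + (1 - A) A (1 - A)` is a sum of conjugates of positive operators by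
positive ones, hence positive. Since `P² = P`, expanding `A - A²` gives
`P⊥ Q P⊥ - P Q P - Q²`. -/

theorem mul_self_le_self_of_nonneg_of_le_one {R : Type*} [Ring R] [PartialOrder R] [StarRing R]
    [StarOrderedRing R] {a : R} (ha₀ : 0 ≤ a) (ha₁ : a ≤ 1) : a * a ≤ a := by
  have hb₀ : 0 ≤ 1 - a := sub_nonneg.mpr ha₁
  have hsum : a - a * a = a * (1 - a) * a + (1 - a) * a * (1 - a) := by noncomm_ring
  rw [← sub_nonneg, hsum]
  exact add_nonneg (conjugate_nonneg_of_nonneg hb₀ ha₀) (conjugate_nonneg_of_nonneg ha₀ hb₀)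

theorem compl_mul_mul_compl_sub_mul_mul_sub_mul_self {R : Type*} [Ring R] {P : R}
    (hP : P * P = P) (Q : R) :
    (1 - P) * Q * (1 - P) - P * Q * P - Q * Q = (Q + P) - (Q + P) * (Q + P) := by
  have hsq : (Q + P) * (Q + P) = Q * Q + Q * P + P * Q + P * P := by noncomm_ring
  rw [hsq, hP]
  noncomm_ring

theorem stmt6_general {E : Type*} [NormedAddCommGroup E] [InnerProductSpace ℂ E] [CompleteSpace E]
    (P Q : E →L[ℂ] E) (hProj : P * P = P)
    (h1 : (Q + P).IsPositive) (h2 : (1 - P - Q).IsPositive) :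
    ((Q + P) - (Q + P) * (Q + P)).IsPositive ∧
      (((1 - P) * Q * (1 - P) - P * Q * P) - Q * Q).IsPositive := by
  have hA₀ : 0 ≤ Q + P := (ContinuousLinearMap.nonneg_iff_isPositive _).mpr h1
  have hA₁ : Q + P ≤ 1 := by
    rw [ContinuousLinearMap.le_def, ← sub_sub, sub_right_comm]
    exact h2
  have key : ((Q + P) - (Q + P) * (Q + P)).IsPositive :=
    (ContinuousLinearMap.nonneg_iff_isPositive _).mp
      (sub_nonneg.mpr (mul_self_le_self_of_nonneg_of_le_one hA₀ hA₁))
  exact ⟨key, compl_mul_mul_compl_sub_mul_mul_sub_mul_self hProj Q ▸ key⟩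

/-- If `P` is an orthogonal projection and `Q` is self-adjoint with `-P ≤ Q ≤ 1 - P`, then
`(Q+P)² ≤ Q+P`, and consequently `Q² ≤ P⊥ Q P⊥ - P Q P` with `P⊥ = 1 - P`. -/
theorem stmt6 {E : Type*} [NormedAddCommGroup E] [InnerProductSpace ℂ E] [CompleteSpace E]
    (P Q : E →L[ℂ] E) (hP : IsSelfAdjoint P) (hProj : P * P = P) (hQ : IsSelfAdjoint Q)
    (h1 : (Q + P).IsPositive) (h2 : (1 - P - Q).IsPositive) :
    ((Q + P) - (Q + P) * (Q + P)).IsPositive ∧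
      (((1 - P) * Q * (1 - P) - P * Q * P) - Q * Q).IsPositive :=
  stmt6_general P Q hProj h1 h2
end

section
/- There is a universal constant C such that for every R > 0, the number of points of (ℕ+1/2)³ (equivalently, of ℕ³ shifted by half-integers, i.e., the set {n/2 : n ∈ ℕ³ with odd coordinates} or simply the half-integer lattice points in the positive octant) contained in the open ball of radius R centered at the origin differs from (4π/3)R³ by at most C·max(1, R²). -/
/-!
Attach to each counted lattice point `p` the half-open cube `∏ (pᵢ/2, (pᵢ+1)/2]`, whose upper
corner is the point `(p+1)/2` itself. These cubes are disjoint, have volume `2⁻³`, and lie in the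
open positive octant. Those of the points in the ball of radius `R` stay inside that ball, and
they cover the octant part of the ball of radius `R - 1`, because every point of a cube is within
`√3/2 < 1` of its upper corner. The reflections in the coordinate hyperplanes cut a ball into
eight congruent octants up to a null set, hence `vol B(R - 1) ≤ N(R) ≤ vol B(R)`, and
`vol B(R) - vol B(R - 1) ≤ 4πR²`.
-/

open MeasureTheory Set Function
open scoped ENNReal

namespace HalfLattice

variable {ι : Type*}

def posOrthant : Set (ι → ℝ) := {x | ∀ i, 0 < x i}

def flipSigns (ε : ι → Bool) (x : ι → ℝ) : ι → ℝ :=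
  fun i => if ε i then -x i else x i

def halfCube (p : ι → ℕ) : Set (ι → ℝ) :=
  univ.pi fun i => Ioc ((p i : ℝ) / 2) (((p i : ℝ) + 1) / 2)

theorem abs_flipSigns (ε : ι → Bool) (x : ι → ℝ) : |flipSigns ε x| = |x| := by
  ext i
  simp only [flipSigns, Pi.abs_apply]
  split <;> simp

theorem flipSigns_decide_neg (x : ι → ℝ) : flipSigns (fun i => decide (x i < 0)) x = |x| := by
  ext i
  by_cases h : x i < 0
  · simp [flipSigns, h, abs_of_neg h]
  · simp [flipSigns, h, abs_of_nonneg (not_lt.mp h)]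

theorem pairwise_disjoint_flipSigns_preimage_posOrthant :
    Pairwise (Disjoint on fun ε : ι → Bool => flipSigns ε ⁻¹' posOrthant) := by
  intro ε η hne
  obtain ⟨i, hi⟩ := Function.ne_iff.mp hne
  refine disjoint_left.mpr fun x hε hη => ?_
  have h₁ := hε i
  have h₂ := hη i
  simp only [flipSigns] at h₁ h₂
  cases hε : ε i <;> cases hη : η i <;> simp_all <;> linarith

theorem iUnion_flipSigns_preimage {s : Set (ι → ℝ)} (hs : ∀ x, |x| ∈ s ↔ x ∈ s) :
    ⋃ ε, flipSigns ε ⁻¹' (s ∩ posOrthant) = s ∩ {x | ∀ i, x i ≠ 0} := by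
  ext x
  simp only [mem_iUnion, mem_preimage, mem_inter_iff, mem_ofPred_eq]
  constructor
  · rintro ⟨ε, hs', hpos⟩
    refine ⟨(hs x).mp (abs_flipSigns ε x ▸ (hs _).mpr hs'), fun i hi => ?_⟩
    have := hpos i
    simp only [flipSigns, hi, neg_zero, ite_self] at this
    exact this.false
  · rintro ⟨hxs, hx0⟩
    refine ⟨fun i => decide (x i < 0), ?_⟩
    rw [flipSigns_decide_neg]
    exact ⟨(hs x).mpr hxs, fun i => abs_pos.mpr (hx0 i)⟩

theorem pairwise_disjoint_halfCube :
    Pairwise (Disjoint on (halfCube : (ι → ℕ) → Set (ι → ℝ))) := by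
  intro p q hne
  obtain ⟨i, hi⟩ := Function.ne_iff.mp hne
  refine disjoint_left.mpr fun x hp hq => ?_
  obtain ⟨hp₁, hp₂⟩ := hp i (mem_univ i)
  obtain ⟨hq₁, hq₂⟩ := hq i (mem_univ i)
  rcases Nat.lt_or_gt_of_ne hi with h | h
  · have : (p i : ℝ) + 1 ≤ q i := by exact_mod_cast h
    linarith
  · have : (q i : ℝ) + 1 ≤ p i := by exact_mod_cast h
    linarith

theorem exists_mem_Ioc_half {t : ℝ} (ht : 0 < t) :
    ∃ n : ℕ, t ∈ Ioc ((n : ℝ) / 2) (((n : ℝ) + 1) / 2) := by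
  have hc : 0 < ⌈2 * t⌉₊ := Nat.ceil_pos.mpr (by positivity)
  refine ⟨⌈2 * t⌉₊ - 1, ?_, ?_⟩ <;> rw [Nat.cast_sub hc, Nat.cast_one]
  · linarith [Nat.ceil_lt_add_one (by positivity : 0 ≤ 2 * t)]
  · linarith [Nat.le_ceil (2 * t)]

variable [Fintype ι]

def sqBall (r : ℝ) : Set (ι → ℝ) := {x | ∑ i, x i ^ 2 < r ^ 2}

def halfLatticePts (R : ℝ) : Set (ι → ℕ) :=
  {p | (fun i => ((p i : ℝ) + 1) / 2) ∈ sqBall R}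

theorem measurableSet_sqBall (r : ℝ) : MeasurableSet (sqBall r : Set (ι → ℝ)) :=
  measurableSet_lt (by fun_prop) measurable_const

theorem abs_mem_sqBall_iff {r : ℝ} {x : ι → ℝ} : |x| ∈ sqBall r ↔ x ∈ sqBall r := by
  simp only [sqBall, mem_ofPred_eq, Pi.abs_apply, sq_abs]

theorem mem_sqBall_of_le {r : ℝ} {x y : ι → ℝ} (hx : 0 ≤ x) (hxy : x ≤ y)
    (hy : y ∈ sqBall r) : x ∈ sqBall r :=
  lt_of_le_of_lt (Finset.sum_le_sum fun i _ => pow_le_pow_left₀ (hx i) (hxy i) 2) hy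

theorem sqBall_eq_preimage_ball {r : ℝ} (hr : 0 ≤ r) :
    (sqBall r : Set (ι → ℝ)) =
      WithLp.toLp 2 ⁻¹' Metric.ball (0 : EuclideanSpace ℝ ι) r := by
  ext x
  rw [mem_preimage, mem_ball_zero_iff, ← sq_lt_sq₀ (norm_nonneg _) hr,
    EuclideanSpace.norm_sq_eq]
  simp [sqBall, sq_abs]

theorem volume_sqBall {r : ℝ} (hr : 0 ≤ r) :
    volume (sqBall r : Set (ι → ℝ)) = volume (Metric.ball (0 : EuclideanSpace ℝ ι) r) := by
  rw [sqBall_eq_preimage_ball hr, (PiLp.volume_preserving_toLp ι).measure_preimage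
    measurableSet_ball.nullMeasurableSet]

theorem volume_sqBall_ne_top {r : ℝ} (hr : 0 ≤ r) :
    volume (sqBall r : Set (ι → ℝ)) ≠ ⊤ :=
  volume_sqBall (ι := ι) hr ▸ measure_ball_lt_top.ne

theorem measurableSet_posOrthant : MeasurableSet (posOrthant : Set (ι → ℝ)) := by
  simpa only [posOrthant, ofPred_forall] using MeasurableSet.iInter fun i =>
    measurableSet_lt measurable_const (measurable_pi_apply i)

theorem measurePreserving_flipSigns (ε : ι → Bool) : MeasurePreserving (flipSigns ε) :=
  volume_preserving_pi (f := fun i (t : ℝ) => if ε i then -t else t) fun i => by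
    cases ε i
    · exact MeasurePreserving.id _
    · exact Measure.measurePreserving_neg _

theorem volume_setOf_exists_eq_zero : volume {x : ι → ℝ | ∃ i, x i = 0} = 0 := by
  rw [ofPred_exists]
  exact measure_iUnion_null fun i => Measure.pi_hyperplane _ i 0

theorem two_pow_card_mul_volume_inter_posOrthant {s : Set (ι → ℝ)} (hsm : MeasurableSet s)
    (hs : ∀ x, |x| ∈ s ↔ x ∈ s) :
    2 ^ Fintype.card ι * volume (s ∩ posOrthant) = volume s := by
  classical
  have hnull : volume {x : ι → ℝ | ∀ i, x i ≠ 0}ᶜ = 0 := by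
    simpa only [compl_ofPred, not_forall, not_not] using volume_setOf_exists_eq_zero
  have hmeas : MeasurableSet (s ∩ posOrthant) := hsm.inter measurableSet_posOrthant
  have hdisj :
      Pairwise (Disjoint on fun ε : ι → Bool => flipSigns ε ⁻¹' (s ∩ posOrthant)) :=
    fun ε η hne => (pairwise_disjoint_flipSigns_preimage_posOrthant hne).mono
      (preimage_mono inter_subset_right) (preimage_mono inter_subset_right)
  rw [← measure_inter_conull (s := s) hnull, ← iUnion_flipSigns_preimage hs,
    measure_iUnion hdisj fun ε => (measurePreserving_flipSigns ε).measurable hmeas, tsum_fintype]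
  simp only [fun ε => (measurePreserving_flipSigns ε).measure_preimage hmeas.nullMeasurableSet,
    Finset.sum_const, Finset.card_univ, Fintype.card_fun, Fintype.card_bool, nsmul_eq_mul,
    Nat.cast_pow, Nat.cast_ofNat]

theorem measurableSet_halfCube (p : ι → ℕ) : MeasurableSet (halfCube p) :=
  MeasurableSet.univ_pi fun _ => measurableSet_Ioc

theorem volume_halfCube (p : ι → ℕ) :
    volume (halfCube p) = 2⁻¹ ^ Fintype.card ι := by
  simp only [halfCube, volume_pi_pi, Real.volume_Ioc, add_div, add_sub_cancel_left, one_div,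
    ENNReal.ofReal_inv_of_pos two_pos, ENNReal.ofReal_ofNat, Finset.prod_const, Finset.card_univ]

theorem two_pow_card_mul_volume_biUnion_halfCube (A : Set (ι → ℕ)) :
    2 ^ Fintype.card ι * volume (⋃ p ∈ A, halfCube p) = A.encard := by
  rw [measure_biUnion A.to_countable (pairwise_disjoint_halfCube.set_pairwise A)
    fun p _ => measurableSet_halfCube p]
  simp only [volume_halfCube, ENNReal.tsum_set_const, ← mul_assoc,
    mul_comm _ (A.encard : ℝ≥0∞)]
  rw [mul_assoc, ← mul_pow, ENNReal.mul_inv_cancel two_ne_zero ENNReal.ofNat_ne_top, one_pow,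
    mul_one]

theorem halfCube_subset_sqBall_inter_posOrthant {R : ℝ} {p : ι → ℕ}
    (hp : p ∈ halfLatticePts R) : halfCube p ⊆ sqBall R ∩ posOrthant := by
  intro x hx
  have hpos : ∀ i, 0 < x i := fun i => lt_of_le_of_lt (by positivity) (hx i (mem_univ i)).1
  exact ⟨mem_sqBall_of_le (fun i => (hpos i).le) (fun i => (hx i (mem_univ i)).2) hp, hpos⟩

-- `δ ≥ √n / 2` is the length of `(1/2, …, 1/2)`, so this is a triangle inequality.
theorem add_half_mem_sqBall {R δ : ℝ} (hδ : (Fintype.card ι : ℝ) ≤ (2 * δ) ^ 2)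
    (hδ₀ : 0 ≤ δ) (hδR : δ ≤ R) {x : ι → ℝ} (hx : x ∈ sqBall (R - δ)) :
    (fun i => x i + 1 / 2) ∈ sqBall R := by
  have hsum : ∑ i, x i ≤ 2 * δ * (R - δ) := by
    refine (abs_le_of_sq_le_sq ?_ (by nlinarith)).trans' (le_abs_self _)
    calc (∑ i, x i) ^ 2 ≤ Fintype.card ι * ∑ i, x i ^ 2 := sq_sum_le_card_mul_sum_sq
      _ ≤ (2 * δ) ^ 2 * (R - δ) ^ 2 :=
        mul_le_mul hδ hx.le (Finset.sum_nonneg fun i _ => sq_nonneg _) (sq_nonneg _)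
      _ = (2 * δ * (R - δ)) ^ 2 := by ring
  have hx' : ∑ i, x i ^ 2 < (R - δ) ^ 2 := hx
  show ∑ i, (x i + 1 / 2) ^ 2 < R ^ 2
  calc ∑ i, (x i + 1 / 2) ^ 2 = ∑ i, x i ^ 2 + ∑ i, x i + Fintype.card ι / 4 := by
        simp only [add_sq, Finset.sum_add_distrib, ← Finset.mul_sum, ← Finset.sum_mul,
          Finset.sum_const, Finset.card_univ, nsmul_eq_mul]
        ring
    _ < (R - δ) ^ 2 + 2 * δ * (R - δ) + δ ^ 2 := by nlinarith
    _ = R ^ 2 := by ring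

theorem sqBall_inter_posOrthant_subset_biUnion_halfCube {R δ : ℝ}
    (hδ : (Fintype.card ι : ℝ) ≤ (2 * δ) ^ 2) (hδ₀ : 0 ≤ δ) (hδR : δ ≤ R) :
    (sqBall (R - δ) : Set (ι → ℝ)) ∩ posOrthant ⊆
      ⋃ p ∈ halfLatticePts R, halfCube p := by
  rintro x ⟨hx, hpos⟩
  choose p hp using fun i => exists_mem_Ioc_half (hpos i)
  refine mem_biUnion (x := p) ?_ fun i _ => hp i
  refine mem_sqBall_of_le (fun i => by positivity) (fun i => ?_)
    (add_half_mem_sqBall hδ hδ₀ hδR hx)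
  linarith [(hp i).1]

theorem encard_halfLatticePts_le (R : ℝ) :
    ((halfLatticePts R : Set (ι → ℕ)).encard : ℝ≥0∞) ≤
      volume (sqBall R : Set (ι → ℝ)) :=
  calc ((halfLatticePts R).encard : ℝ≥0∞)
      = 2 ^ Fintype.card ι * volume (⋃ p ∈ halfLatticePts R, halfCube p) :=
        (two_pow_card_mul_volume_biUnion_halfCube _).symm
    _ ≤ 2 ^ Fintype.card ι * volume (sqBall R ∩ posOrthant) := by
        gcongr
        exact iUnion₂_subset fun p hp => halfCube_subset_sqBall_inter_posOrthant hp
    _ = volume (sqBall R) :=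
        two_pow_card_mul_volume_inter_posOrthant (measurableSet_sqBall R)
          fun _ => abs_mem_sqBall_iff

theorem volume_sqBall_sub_le_encard_halfLatticePts {R δ : ℝ}
    (hδ : (Fintype.card ι : ℝ) ≤ (2 * δ) ^ 2) (hδ₀ : 0 ≤ δ) (hδR : δ ≤ R) :
    volume (sqBall (R - δ) : Set (ι → ℝ)) ≤ (halfLatticePts R : Set (ι → ℕ)).encard :=
  calc volume (sqBall (R - δ) : Set (ι → ℝ))
      = 2 ^ Fintype.card ι * volume (sqBall (R - δ) ∩ posOrthant) :=
        (two_pow_card_mul_volume_inter_posOrthant (measurableSet_sqBall _)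
          fun _ => abs_mem_sqBall_iff).symm
    _ ≤ 2 ^ Fintype.card ι * volume (⋃ p ∈ halfLatticePts R, halfCube p) := by
        gcongr
        exact sqBall_inter_posOrthant_subset_biUnion_halfCube hδ hδ₀ hδR
    _ = (halfLatticePts R).encard := two_pow_card_mul_volume_biUnion_halfCube _

theorem natCard_halfLatticePts_le {R : ℝ} (hR : 0 ≤ R) :
    (Nat.card (halfLatticePts R : Set (ι → ℕ)) : ℝ) ≤
      (volume (sqBall R : Set (ι → ℝ))).toReal := by
  rw [← ENNReal.toReal_enatCard]
  exact ENNReal.toReal_mono (volume_sqBall_ne_top hR) (encard_halfLatticePts_le R)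

theorem volume_sqBall_sub_le_natCard_halfLatticePts {R δ : ℝ}
    (hδ : (Fintype.card ι : ℝ) ≤ (2 * δ) ^ 2) (hδ₀ : 0 ≤ δ) (hδR : δ ≤ R) :
    (volume (sqBall (R - δ) : Set (ι → ℝ))).toReal ≤
      Nat.card (halfLatticePts R : Set (ι → ℕ)) := by
  rw [← ENNReal.toReal_enatCard]
  exact ENNReal.toReal_mono ((encard_halfLatticePts_le R).trans_lt
    (volume_sqBall_ne_top (hδ₀.trans hδR)).lt_top).ne
    (volume_sqBall_sub_le_encard_halfLatticePts hδ hδ₀ hδR)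

theorem volume_sqBall_fin_three {r : ℝ} (hr : 0 ≤ r) :
    volume (sqBall r : Set (Fin 3 → ℝ)) = ENNReal.ofReal (4 * Real.pi / 3 * r ^ 3) := by
  rw [volume_sqBall hr, EuclideanSpace.volume_ball_fin_three, ← ENNReal.ofReal_pow hr,
    ← ENNReal.ofReal_mul (by positivity)]
  ring_nf

end HalfLattice

/-- There is a universal constant `C` such that for every `R > 0`, the number of half-integer
lattice points in the positive octant (points `(n+1)/2`, `n ∈ ℕ³`) inside the open ball of
radius `R` differs from `(4π/3)R³` by at most `C·max(1, R²)`. -/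
theorem stmt8 : ∃ C > (0 : ℝ), ∀ R : ℝ, 0 < R →
    |(Nat.card {p : Fin 3 → ℕ // ∑ j, (((p j : ℝ) + 1) / 2) ^ 2 < R ^ 2} : ℝ) -
        (4 * Real.pi / 3) * R ^ 3| ≤ C * max 1 (R ^ 2) := by
  refine ⟨4 * Real.pi, by positivity, fun R hR => ?_⟩
  change |(Nat.card (HalfLattice.halfLatticePts R : Set (Fin 3 → ℕ)) : ℝ) - _| ≤ _
  have hupper := HalfLattice.natCard_halfLatticePts_le (ι := Fin 3) hR.le
  rw [HalfLattice.volume_sqBall_fin_three hR.le, ENNReal.toReal_ofReal (by positivity)] at hupper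
  set N : ℝ := (Nat.card (HalfLattice.halfLatticePts R : Set (Fin 3 → ℕ)) : ℝ)
  have hπ := Real.pi_pos
  rcases lt_or_ge R 1 with hR1 | hR1
  · have hR3 : R ^ 3 ≤ 1 := pow_le_one₀ hR.le hR1.le
    calc |N - 4 * Real.pi / 3 * R ^ 3| ≤ 4 * Real.pi / 3 * R ^ 3 :=
          abs_sub_le_of_nonneg_of_le (Nat.cast_nonneg _) hupper (by positivity) le_rfl
      _ ≤ 4 * Real.pi * max 1 (R ^ 2) := by nlinarith [le_max_left 1 (R ^ 2)]
  · have hlower := HalfLattice.volume_sqBall_sub_le_natCard_halfLatticePts (ι := Fin 3)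
      (δ := 1) (by norm_num) zero_le_one hR1
    rw [HalfLattice.volume_sqBall_fin_three (by linarith),
      ENNReal.toReal_ofReal (by positivity)] at hlower
    have hcube : R ^ 3 - (R - 1) ^ 3 ≤ 3 * R ^ 2 := by nlinarith
    rw [abs_sub_comm, abs_of_nonneg (by linarith)]
    nlinarith [le_max_right 1 (R ^ 2)]
end

section
/- There is a universal constant C such that for all M > 0 and 0 < x < 1, the number of points of (ℕ/2)³ in the open ball of radius M(1+x)^{1/2} minus the number in the closed ball of radius M(1-x)^{1/2} is at most C(M³x + max(1, M²)). -/
/-!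
Attach to `p : ι → ℕ` the half-integer point `(p + 1) / 2` and the half-open cell
`∏ⱼ [pⱼ / 2, (pⱼ + 1) / 2)` of volume `2⁻ⁿ`, which has that point as its corner farthest from the
origin and diameter `√n / 2`. The cells are disjoint, and the cell of a point `q` with
`r < ‖q‖ < R` lies in the shell `r - √n / 2 ≤ ‖·‖ < R`. Hence the number of such points is at most
`2ⁿ` times the volume of that shell, which in dimension three is
`(4π/3) (R³ - (r - √3 / 2)₊³)`. For `R = M √(1 + x)` and `r = M √(1 - x)` this is
`O(M³ x)` from `R - r ≤ 2 M x`, plus `O(max(1, M²))` from the thickening by `√3 / 2`.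
-/

open MeasureTheory Metric Set Function Real

lemma EuclideanSpace.norm_le_norm_of_abs_le {ι : Type*} [Fintype ι] {x y : EuclideanSpace ℝ ι}
    (h : ∀ i, |x i| ≤ |y i|) : ‖x‖ ≤ ‖y‖ := by
  simp only [EuclideanSpace.norm_eq, Real.norm_eq_abs]
  exact Real.sqrt_le_sqrt (Finset.sum_le_sum fun i _ => pow_le_pow_left₀ (abs_nonneg _) (h i) 2)

lemma EuclideanSpace.norm_le_sqrt_card_mul {ι : Type*} [Fintype ι] {x : EuclideanSpace ℝ ι}
    {c : ℝ} (hc : 0 ≤ c) (h : ∀ i, |x i| ≤ c) : ‖x‖ ≤ √(Fintype.card ι) * c := by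
  rw [EuclideanSpace.norm_eq, ← Real.sqrt_sq hc, ← Real.sqrt_mul (Nat.cast_nonneg _)]
  refine Real.sqrt_le_sqrt ?_
  simpa [Real.norm_eq_abs] using Finset.sum_le_sum fun i (_ : i ∈ Finset.univ) =>
    pow_le_pow_left₀ (abs_nonneg _) (h i) 2

namespace HalfLattice

variable {ι : Type*}

noncomputable def point (p : ι → ℕ) : EuclideanSpace ℝ ι :=
  WithLp.toLp 2 fun j => ((p j : ℝ) + 1) / 2

def cell (p : ι → ℕ) : Set (EuclideanSpace ℝ ι) :=
  WithLp.ofLp ⁻¹' univ.pi fun j => Ico ((p j : ℝ) / 2) (((p j : ℝ) + 1) / 2)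

lemma floor_two_mul_eq_of_mem_cell {p : ι → ℕ} {y : EuclideanSpace ℝ ι} (hy : y ∈ cell p)
    (j : ι) : ⌊2 * y j⌋₊ = p j := by
  obtain ⟨h₁, h₂⟩ := hy j (mem_univ j)
  have : (0 : ℝ) ≤ p j / 2 := by positivity
  rw [Nat.floor_eq_iff (by linarith)]
  constructor <;> linarith

lemma pairwise_disjoint_cell :
    Pairwise (Disjoint on (cell : (ι → ℕ) → Set (EuclideanSpace ℝ ι))) :=
  fun p q hpq => Set.disjoint_left.2 fun y hp hq => hpq <| funext fun j => by
    rw [← floor_two_mul_eq_of_mem_cell hp j, floor_two_mul_eq_of_mem_cell hq j]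

variable [Fintype ι]

lemma measurableSet_cell (p : ι → ℕ) : MeasurableSet (cell p) :=
  (MeasurableSet.univ_pi fun _ => measurableSet_Ico).preimage (WithLp.measurable_ofLp _ _)

lemma norm_point_sq (p : ι → ℕ) : ‖point p‖ ^ 2 = ∑ j, (((p j : ℝ) + 1) / 2) ^ 2 := by
  simp only [EuclideanSpace.norm_sq_eq, point, Real.norm_eq_abs, sq_abs]

lemma finite_setOf_norm_point_le (R : ℝ) : {p : ι → ℕ | ‖point p‖ ≤ R}.Finite := by
  refine (Set.Finite.pi fun _ => Set.finite_Iic ⌊2 * R⌋₊).subset fun p hp j _ => ?_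
  have : ((p j : ℝ) + 1) / 2 ≤ R :=
    (le_abs_self _).trans ((PiLp.norm_apply_le (point p) j).trans hp)
  exact Nat.le_floor (by linarith)

lemma finite_setOf_norm_point_lt (R : ℝ) : {p : ι → ℕ | ‖point p‖ < R}.Finite :=
  (finite_setOf_norm_point_le R).subset <| ofPred_subset_ofPred.2 fun _ => le_of_lt

lemma volume_cell (p : ι → ℕ) : volume (cell p) = 2⁻¹ ^ Fintype.card ι := by
  rw [cell, (PiLp.volume_preserving_ofLp ι).measure_preimage
    (MeasurableSet.univ_pi fun _ => measurableSet_Ico).nullMeasurableSet, volume_pi_pi]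
  have (j : ι) : ((p j : ℝ) + 1) / 2 - p j / 2 = 2⁻¹ := by ring
  simp [Real.volume_Ico, this]

lemma norm_le_norm_point_of_mem_cell {p : ι → ℕ} {y : EuclideanSpace ℝ ι} (hy : y ∈ cell p) :
    ‖y‖ ≤ ‖point p‖ :=
  EuclideanSpace.norm_le_norm_of_abs_le fun j => by
    obtain ⟨h₁, h₂⟩ := hy j (mem_univ j)
    have : (0 : ℝ) ≤ p j / 2 := by positivity
    simp only [point]
    rw [abs_of_nonneg (by linarith), abs_of_nonneg (by positivity)]
    exact h₂.le

lemma norm_point_sub_le_of_mem_cell {p : ι → ℕ} {y : EuclideanSpace ℝ ι} (hy : y ∈ cell p) :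
    ‖point p - y‖ ≤ √(Fintype.card ι) / 2 := by
  rw [div_eq_mul_one_div]
  refine EuclideanSpace.norm_le_sqrt_card_mul (by norm_num) fun j => ?_
  obtain ⟨h₁, h₂⟩ := hy j (mem_univ j)
  simp only [point, PiLp.sub_apply]
  rw [abs_le]
  constructor <;> linarith

lemma cell_subset_ball_sdiff_ball {p : ι → ℕ} {r R : ℝ} (hr : r < ‖point p‖)
    (hR : ‖point p‖ < R) : cell p ⊆ ball 0 R \ ball 0 (r - √(Fintype.card ι) / 2) := by
  intro y hy
  have h₁ := norm_le_norm_point_of_mem_cell hy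
  have h₂ := norm_point_sub_le_of_mem_cell hy
  have h₃ := norm_sub_norm_le (point p) y
  simp only [mem_sdiff, mem_ball_zero_iff, not_lt]
  constructor <;> linarith

lemma natCard_sum_sq_lt_eq {R : ℝ} (hR : 0 ≤ R) :
    Nat.card {p : ι → ℕ // ∑ j, (((p j : ℝ) + 1) / 2) ^ 2 < R ^ 2} =
      {p : ι → ℕ | ‖point p‖ < R}.ncard := by
  rw [← Nat.card_coe_set_eq]
  exact Nat.card_congr <| Equiv.subtypeEquivRight fun p => by
    rw [← norm_point_sq, pow_lt_pow_iff_left₀ (norm_nonneg _) hR two_ne_zero]; rfl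

lemma natCard_sum_sq_le_eq {r : ℝ} (hr : 0 ≤ r) :
    Nat.card {p : ι → ℕ // ∑ j, (((p j : ℝ) + 1) / 2) ^ 2 ≤ r ^ 2} =
      {p : ι → ℕ | ‖point p‖ ≤ r}.ncard := by
  rw [← Nat.card_coe_set_eq]
  exact Nat.card_congr <| Equiv.subtypeEquivRight fun p => by
    rw [← norm_point_sq, pow_le_pow_iff_left₀ (norm_nonneg _) hr two_ne_zero]; rfl

theorem ncard_mul_le_volume_real (r R : ℝ) :
    (({p : ι → ℕ | ‖point p‖ < R} \ {p | ‖point p‖ ≤ r}).ncard : ℝ) * 2⁻¹ ^ Fintype.card ι ≤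
      volume.real (ball (0 : EuclideanSpace ℝ ι) R \ ball 0 (r - √(Fintype.card ι) / 2)) := by
  have hfin := (finite_setOf_norm_point_lt R).sdiff (t := {p : ι → ℕ | ‖point p‖ ≤ r})
  set F := hfin.toFinset
  have hcells : ⋃ p ∈ F, cell p ⊆ ball 0 R \ ball 0 (r - √(Fintype.card ι) / 2) :=
    iUnion₂_subset fun p hp => by
      obtain ⟨hR, hr⟩ := (Finite.mem_toFinset _).1 hp
      exact cell_subset_ball_sdiff_ball (lt_of_not_ge hr) hR
  calc _ = ∑ p ∈ F, volume.real (cell p) := by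
        simp [measureReal_def, volume_cell, ncard_eq_toFinset_card _ hfin, F]
    _ = volume.real (⋃ p ∈ F, cell p) :=
        (measureReal_biUnion_finset (pairwise_disjoint_cell.set_pairwise _)
          (fun p _ => measurableSet_cell p) fun p _ => by simp [volume_cell]).symm
    _ ≤ _ := measureReal_mono hcells
        ((measure_mono sdiff_subset).trans_lt measure_ball_lt_top).ne

theorem ncard_sub_ncard_le (r R : ℝ) :
    ({p : ι → ℕ | ‖point p‖ < R}.ncard : ℝ) - {p : ι → ℕ | ‖point p‖ ≤ r}.ncard ≤
      2 ^ Fintype.card ι * volume.real (ball (0 : EuclideanSpace ℝ ι) R \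
        ball 0 (r - √(Fintype.card ι) / 2)) := by
  have hsplit : ({p : ι → ℕ | ‖point p‖ < R}.ncard : ℝ) ≤
      ({p : ι → ℕ | ‖point p‖ < R} \ {p | ‖point p‖ ≤ r}).ncard +
        {p : ι → ℕ | ‖point p‖ ≤ r}.ncard := by
    exact_mod_cast ncard_le_ncard_sdiff_add_ncard _ _ (finite_setOf_norm_point_le r)
  have hcells := ncard_mul_le_volume_real (ι := ι) r R
  rw [inv_pow, ← div_eq_mul_inv, div_le_iff₀ (by positivity)] at hcells
  linarith

end HalfLattice

lemma volume_real_ball_sdiff_ball_fin_three {r R : ℝ} (hrR : r ≤ R) :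
    volume.real (ball (0 : EuclideanSpace ℝ (Fin 3)) R \ ball 0 r) =
      π * 4 / 3 * (max R 0 ^ 3 - max r 0 ^ 3) := by
  rw [measureReal_sdiff (ball_subset_ball hrR) measurableSet_ball]
  simp only [measureReal_def, EuclideanSpace.volume_ball_fin_three, ENNReal.toReal_mul,
    ENNReal.toReal_pow, ENNReal.toReal_ofReal', max_eq_left (by positivity : 0 ≤ π * 4 / 3)]
  ring

lemma pow_three_sub_pow_three_le {a b : ℝ} (hb : 0 ≤ b) (hba : b ≤ a) :
    a ^ 3 - b ^ 3 ≤ 3 * a ^ 2 * (a - b) := by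
  nlinarith [mul_nonneg hb (sub_nonneg.2 hba), mul_nonneg (hb.trans hba) (sub_nonneg.2 hba)]

lemma pow_three_sub_max_sub_pow_three_le {b d : ℝ} (hb : 0 ≤ b) (hd : 0 ≤ d) :
    b ^ 3 - max (b - d) 0 ^ 3 ≤ 3 * max b d ^ 2 * d := by
  rcases le_total d b with hdb | hbd
  · rw [max_eq_left (by linarith), max_eq_left hdb]
    simpa using pow_three_sub_pow_three_le (sub_nonneg.2 hdb) (sub_le_self b hd)
  · rw [max_eq_right (by linarith), max_eq_right hbd]
    nlinarith [pow_le_pow_left₀ hb hbd 3]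

lemma sqrt_one_add_sub_sqrt_one_sub_le {x : ℝ} (hx0 : 0 ≤ x) (hx1 : x ≤ 1) :
    √(1 + x) - √(1 - x) ≤ 2 * x := by
  have hp := Real.sq_sqrt (by linarith : 0 ≤ 1 + x)
  have hm := Real.sq_sqrt (by linarith : 0 ≤ 1 - x)
  have h1 : 1 ≤ √(1 + x) := Real.one_le_sqrt.2 (by linarith)
  nlinarith [Real.sqrt_nonneg (1 - x)]

lemma shell_radii_bound {M x : ℝ} (hM : 0 < M) (hx0 : 0 < x) (hx1 : x < 1) :
    (M * √(1 + x)) ^ 3 - max (M * √(1 - x) - √3 / 2) 0 ^ 3 ≤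
      12 * (M ^ 3 * x + max 1 (M ^ 2)) := by
  set R := M * √(1 + x)
  set r := M * √(1 - x)
  have hR2 : R ^ 2 ≤ 2 * M ^ 2 := by
    rw [mul_pow, Real.sq_sqrt (by linarith)]; nlinarith
  have hRr : R - r ≤ 2 * M * x := by
    have := sqrt_one_add_sub_sqrt_one_sub_le hx0.le hx1.le
    rw [← mul_sub]; nlinarith
  have hr0 : 0 ≤ r := by positivity
  have hrR : r ≤ R := mul_le_mul_of_nonneg_left (Real.sqrt_le_sqrt (by linarith)) hM.le
  have hrM : r ≤ M := mul_le_of_le_one_right hM.le (Real.sqrt_le_one.2 (by linarith))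
  have hd : √3 / 2 ≤ 1 := by
    rw [div_le_one two_pos, Real.sqrt_le_left two_pos.le]; norm_num
  have houter : R ^ 3 - r ^ 3 ≤ 12 * M ^ 3 * x := by
    have := pow_three_sub_pow_three_le hr0 hrR
    nlinarith [mul_le_mul hR2 hRr (by linarith) (by positivity)]
  have hinner : r ^ 3 - max (r - √3 / 2) 0 ^ 3 ≤ 3 * max 1 (M ^ 2) := by
    have hmax : max r (√3 / 2) ^ 2 ≤ max 1 (M ^ 2) := by
      have h := max_le_max hrM hd
      rcases le_total 1 M with hM1 | hM1
      · rw [max_eq_left hM1] at h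
        exact (pow_le_pow_left₀ (by positivity) h 2).trans (le_max_right _ _)
      · rw [max_eq_right hM1] at h
        exact (pow_le_one₀ (by positivity) h).trans (le_max_left _ _)
    have := pow_three_sub_max_sub_pow_three_le hr0 (by positivity : 0 ≤ √3 / 2)
    nlinarith [mul_le_mul hmax hd (by positivity) (by positivity)]
  nlinarith [le_max_left 1 (M ^ 2), mul_pos (pow_pos hM 3) hx0]

/-- There is a universal constant `C` such that for all `M > 0` and `0 < x < 1`, the number of
half-integer lattice points of the positive octant in the open ball of radius `M(1+x)^{1/2}`
minus the number in the closed ball of radius `M(1-x)^{1/2}` is at most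
`C(M³x + max(1, M²))`. -/
theorem stmt9 : ∃ C > (0 : ℝ), ∀ M x : ℝ, 0 < M → 0 < x → x < 1 →
    (Nat.card {p : Fin 3 → ℕ // ∑ j, (((p j : ℝ) + 1) / 2) ^ 2 < M ^ 2 * (1 + x)} : ℝ) -
        (Nat.card {p : Fin 3 → ℕ // ∑ j, (((p j : ℝ) + 1) / 2) ^ 2 ≤ M ^ 2 * (1 - x)} : ℝ) ≤
      C * (M ^ 3 * x + max 1 (M ^ 2)) := by
  refine ⟨128 * π, by positivity, fun M x hM hx0 hx1 => ?_⟩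
  have hR : M ^ 2 * (1 + x) = (M * √(1 + x)) ^ 2 := by rw [mul_pow, Real.sq_sqrt (by linarith)]
  have hr : M ^ 2 * (1 - x) = (M * √(1 - x)) ^ 2 := by rw [mul_pow, Real.sq_sqrt (by linarith)]
  rw [hR, hr, HalfLattice.natCard_sum_sq_lt_eq (by positivity),
    HalfLattice.natCard_sum_sq_le_eq (by positivity)]
  have hrR : M * √(1 - x) - √3 / 2 ≤ M * √(1 + x) := by
    have := mul_le_mul_of_nonneg_left (Real.sqrt_le_sqrt (by linarith : 1 - x ≤ 1 + x)) hM.le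
    linarith [Real.sqrt_nonneg 3]
  calc _ ≤ 2 ^ 3 * volume.real (ball (0 : EuclideanSpace ℝ (Fin 3)) (M * √(1 + x)) \
          ball 0 (M * √(1 - x) - √3 / 2)) := by
        simpa using HalfLattice.ncard_sub_ncard_le (ι := Fin 3) (M * √(1 - x)) (M * √(1 + x))
    _ = 8 * (π * 4 / 3) *
          ((M * √(1 + x)) ^ 3 - max (M * √(1 - x) - √3 / 2) 0 ^ 3) := by
        rw [volume_real_ball_sdiff_ball_fin_three hrR, max_eq_left (by positivity)]
        ring
    _ ≤ 8 * (π * 4 / 3) * (12 * (M ^ 3 * x + max 1 (M ^ 2))) := by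
        gcongr
        exact shell_radii_bound hM hx0 hx1
    _ = 128 * π * (M ^ 3 * x + max 1 (M ^ 2)) := by ring
end

section
/- Let μ > 0, m > 0 and let ξ ∈ L²(ℝ^{3N}). Define (G_μ ξ_i)^(k₀, k⃗) = ((1/(2m))k₀² + (1/2)|k⃗|² + μ)^{-1} ξ̂(k₀ + k_i, k̂_i), where k̂_i omits the i-th coordinate. Then ‖G_μ ξ_i‖²_{L²(ℝ^{3(N+1)})} = π² (2m/(m+1))^{3/2} ∫_{ℝ^{3N}} |ξ̂(k_i, k̂_i)|² (k_i²/(2(1+m)) + (1/2)|k̂_i|² + μ)^{-1/2} dk⃗. In particular ‖G_μ ξ_i‖² ≤ π² (2m/(m+1))^{3/2} μ^{-1/2} ‖ξ‖²_{L²(ℝ^{3N})}. -/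
/-!
Translating `k_i ↦ k_i - k₀` moves the shift from the argument of `ξ` into the symbol; after
Tonelli, the `k₀`-integral is taken in the relative momentum `t = k₀ - (m/(m+1)) k_i`, in which
the cross term of the kinetic energy cancels:
`k₀²/(2m) + (k_i - k₀)²/2 = ((m+1)/(2m)) t² + k_i²/(2(1+m))`.
The remaining integral `∫_{ℝ³} (c t² + γ)⁻² dt = π² c^{-3/2} γ^{-1/2}` follows by scaling from
`∫_{ℝ³} (1 + |u|²)⁻² du = 4π ∫₀^∞ r² (1 + r²)⁻² dr = π²`, where `(arctan r - r/(1+r²))/2` is an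
antiderivative of the radial integrand.
-/

open MeasureTheory Set Filter Real Topology
open scoped ENNReal

local notation "ℝ³" => EuclideanSpace ℝ (Fin 3)

lemma hasDerivAt_arctan_sub_div_one_add_sq (y : ℝ) :
    HasDerivAt (fun y => (arctan y - y / (1 + y ^ 2)) / 2) (y ^ 2 * ((1 + y ^ 2)⁻¹) ^ 2) y := by
  have hpos : 0 < 1 + y ^ 2 := by positivity
  have h := ((hasDerivAt_arctan y).sub ((hasDerivAt_id y).div
    ((hasDerivAt_pow 2 y).const_add 1) hpos.ne')).div_const 2
  refine h.congr_deriv ?_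
  simp only [id, Nat.cast_ofNat]
  field_simp
  ring

lemma tendsto_arctan_sub_div_one_add_sq :
    Tendsto (fun y : ℝ => (arctan y - y / (1 + y ^ 2)) / 2) atTop (𝓝 (π / 4)) := by
  have h : Tendsto (fun y : ℝ => y / (1 + y ^ 2)) atTop (𝓝 0) := by
    refine squeeze_zero' ?_ ?_ tendsto_inv_atTop_zero
    · filter_upwards [eventually_ge_atTop 0] with y hy using by positivity
    · filter_upwards [eventually_gt_atTop 0] with y hy
      rw [div_le_iff₀ (by positivity)]
      field_simp
      nlinarith
  convert ((tendsto_nhds_of_tendsto_nhdsWithin tendsto_arctan_atTop).sub h).div_const 2 using 2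
  ring

lemma integrableOn_Ioi_sq_mul_inv_one_add_sq_sq :
    IntegrableOn (fun y : ℝ => y ^ 2 * ((1 + y ^ 2)⁻¹) ^ 2) (Ioi 0) :=
  integrableOn_Ioi_deriv_of_nonneg' (fun y _ => hasDerivAt_arctan_sub_div_one_add_sq y)
    (fun y _ => by positivity) tendsto_arctan_sub_div_one_add_sq

lemma integral_Ioi_sq_mul_inv_one_add_sq_sq :
    ∫ y in Ioi (0 : ℝ), y ^ 2 * ((1 + y ^ 2)⁻¹) ^ 2 = π / 4 := by
  rw [integral_Ioi_of_hasDerivAt_of_nonneg' (fun y _ => hasDerivAt_arctan_sub_div_one_add_sq y)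
    (fun y _ => by positivity) tendsto_arctan_sub_div_one_add_sq]
  simp

lemma integrable_inv_one_add_norm_sq_sq :
    Integrable fun u : ℝ³ => ((1 + ‖u‖ ^ 2)⁻¹) ^ 2 :=
  (integrable_fun_norm_addHaar volume (f := fun y => ((1 + y ^ 2)⁻¹) ^ 2)).2 <| by
    simpa using integrableOn_Ioi_sq_mul_inv_one_add_sq_sq

lemma integral_inv_one_add_norm_sq_sq :
    ∫ u : ℝ³, ((1 + ‖u‖ ^ 2)⁻¹) ^ 2 = π ^ 2 := by
  rw [integral_fun_norm_addHaar volume (fun y => ((1 + y ^ 2)⁻¹) ^ 2)]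
  simp only [finrank_euclideanSpace_fin, Measure.real, EuclideanSpace.volume_ball_fin_three,
    smul_eq_mul, nsmul_eq_mul, Nat.add_one_sub_one, integral_Ioi_sq_mul_inv_one_add_sq_sq]
  rw [ENNReal.ofReal_one, one_pow, one_mul, ENNReal.toReal_ofReal (by positivity)]
  ring

lemma lintegral_inv_mul_norm_sq_add_sq {c γ : ℝ} (hc : 0 < c) (hγ : 0 < γ) :
    ∫⁻ t : ℝ³, ENNReal.ofReal (((c * ‖t‖ ^ 2 + γ)⁻¹) ^ 2) =
      ENNReal.ofReal (π ^ 2 / (√c ^ 3 * √γ)) := by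
  set r := √c / √γ
  have hr : 0 < r := by positivity
  have hscale : (fun t : ℝ³ => ((c * ‖t‖ ^ 2 + γ)⁻¹) ^ 2) =
      fun t => (γ⁻¹) ^ 2 * ((1 + ‖r • t‖ ^ 2)⁻¹) ^ 2 := by
    funext t
    rw [norm_smul, Real.norm_of_nonneg hr.le, mul_pow, div_pow, Real.sq_sqrt hc.le,
      Real.sq_sqrt hγ.le]
    field_simp
    ring
  have hint : Integrable fun t : ℝ³ => ((c * ‖t‖ ^ 2 + γ)⁻¹) ^ 2 := by
    rw [hscale]
    exact (integrable_inv_one_add_norm_sq_sq.comp_smul hr.ne').const_mul _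
  rw [← ofReal_integral_eq_lintegral_ofReal hint (.of_forall fun t => by positivity), hscale,
    integral_const_mul, Measure.integral_comp_smul volume (fun u : ℝ³ => ((1 + ‖u‖ ^ 2)⁻¹) ^ 2),
    integral_inv_one_add_norm_sq_sq, finrank_euclideanSpace_fin, abs_of_pos (by positivity)]
  congr 1
  simp only [r, smul_eq_mul]
  have hγ' := Real.sq_sqrt hγ.le
  field_simp
  linear_combination (√γ ^ 2 + γ) * hγ'

lemma Finset.sum_apply_update_eq_add_sum_erase {ι α M : Type*} [Fintype ι] [DecidableEq ι]
    [AddCommMonoid M] (g : α → M) (k : ι → α) (i : ι) (x : α) :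
    ∑ j, g (Function.update k i x j) = g x + ∑ j ∈ Finset.univ.erase i, g (k j) := by
  rw [← Finset.add_sum_erase _ _ (Finset.mem_univ i), Function.update_self]
  congr 1
  exact Finset.sum_congr rfl fun j hj => by rw [Function.update_of_ne (Finset.ne_of_mem_erase hj)]

lemma lintegral_comp_update_add_apply_self {ι G : Type*} [Fintype ι] [DecidableEq ι]
    [AddCommGroup G] [MeasurableSpace G] [MeasurableAdd G] {μ : Measure (ι → G)}
    [μ.IsAddRightInvariant] (f : (ι → G) → ℝ≥0∞) (i : ι) (x : G) :
    ∫⁻ k, f (Function.update k i (x + k i)) ∂μ = ∫⁻ k, f k ∂μ := by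
  have hshift : ∀ k : ι → G, Function.update k i (x + k i) = k + Pi.single i x := fun k => by
    ext1 j
    rcases eq_or_ne j i with rfl | h
    · simp [add_comm]
    · simp [h]
  simp_rw [hshift]
  exact lintegral_add_right_eq_self f _

lemma kinetic_energy_split {V : Type*} [NormedAddCommGroup V] [InnerProductSpace ℝ V] {m : ℝ}
    (hm : 0 < m) (s t : V) :
    1 / (2 * m) * ‖t + (m / (m + 1)) • s‖ ^ 2 + 1 / 2 * ‖s - (t + (m / (m + 1)) • s)‖ ^ 2 =
      (m + 1) / (2 * m) * ‖t‖ ^ 2 + ‖s‖ ^ 2 / (2 * (1 + m)) := by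
  have hm1 : m + 1 ≠ 0 := by positivity
  have hs : s - (t + (m / (m + 1)) • s) = (1 / (m + 1)) • s - t := by
    match_scalars
    · field_simp
      ring
    · ring
  rw [hs, norm_add_sq_real, norm_sub_sq_real, real_inner_smul_right, real_inner_smul_left,
    real_inner_comm, norm_smul, norm_smul, Real.norm_of_nonneg (by positivity),
    Real.norm_of_nonneg (by positivity)]
  field_simp
  ring

noncomputable section Symbols

variable {ι E : Type*} [Fintype ι] [DecidableEq ι] [NormedAddCommGroup E]

def freeSymbol (m μ : ℝ) (k₀ : E) (k : ι → E) : ℝ :=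
  1 / (2 * m) * ‖k₀‖ ^ 2 + 1 / 2 * ∑ j, ‖k j‖ ^ 2 + μ

def reducedSymbol (i : ι) (m μ : ℝ) (k : ι → E) : ℝ :=
  ‖k i‖ ^ 2 / (2 * (1 + m)) + 1 / 2 * ∑ j ∈ Finset.univ.erase i, ‖k j‖ ^ 2 + μ

lemma le_reducedSymbol (i : ι) {m : ℝ} (hm : 0 < m) (μ : ℝ) (k : ι → E) :
    μ ≤ reducedSymbol i m μ k := by
  have hi : 0 ≤ ‖k i‖ ^ 2 / (2 * (1 + m)) := by positivity
  have hrest : 0 ≤ ∑ j ∈ Finset.univ.erase i, ‖k j‖ ^ 2 :=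
    Finset.sum_nonneg fun j _ => by positivity
  unfold reducedSymbol
  linarith

lemma freeSymbol_update [InnerProductSpace ℝ E] (i : ι) {m : ℝ} (hm : 0 < m) (μ : ℝ)
    (k : ι → E) (t : E) :
    freeSymbol m μ (t + (m / (m + 1)) • k i)
        (Function.update k i (k i - (t + (m / (m + 1)) • k i))) =
      (m + 1) / (2 * m) * ‖t‖ ^ 2 + reducedSymbol i m μ k := by
  unfold freeSymbol reducedSymbol
  rw [Finset.sum_apply_update_eq_add_sum_erase (‖·‖ ^ 2)]
  linear_combination kinetic_energy_split hm (k i) t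

end Symbols

lemma lintegral_inv_freeSymbol_update_sq {ι : Type*} [Fintype ι] [DecidableEq ι] (i : ι)
    {m μ : ℝ} (hm : 0 < m) (hμ : 0 < μ) (k : ι → ℝ³) :
    ∫⁻ k₀ : ℝ³, ENNReal.ofReal ((freeSymbol m μ k₀ (Function.update k i (k i - k₀)))⁻¹ ^ 2) =
      ENNReal.ofReal (π ^ 2 * (2 * m / (m + 1)) ^ ((3 : ℝ) / 2) *
        (√(reducedSymbol i m μ k))⁻¹) := by
  rw [← lintegral_add_right_eq_self _ ((m / (m + 1)) • k i)]
  simp_rw [freeSymbol_update i hm]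
  rw [lintegral_inv_mul_norm_sq_add_sq (by positivity) (hμ.trans_le (le_reducedSymbol i hm μ k)),
    Real.rpow_div_two_eq_sqrt _ (by positivity), ← inv_div (m + 1), Real.sqrt_inv]
  norm_cast
  congr 1
  ring

theorem lintegral_inv_freeSymbol_sq_mul_norm_sq {N : ℕ} (i : Fin N) {m μ : ℝ} (hm : 0 < m)
    (hμ : 0 < μ) {ξ : (Fin N → ℝ³) → ℂ} (hξ : Measurable ξ) :
    ∫⁻ p : ℝ³ × (Fin N → ℝ³), ENNReal.ofReal ((freeSymbol m μ p.1 p.2)⁻¹ ^ 2 *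
        ‖ξ (Function.update p.2 i (p.1 + p.2 i))‖ ^ 2) =
      ENNReal.ofReal (π ^ 2 * (2 * m / (m + 1)) ^ ((3 : ℝ) / 2)) *
        ∫⁻ k, ENNReal.ofReal (‖ξ k‖ ^ 2 * (√(reducedSymbol i m μ k))⁻¹) := by
  calc _ = ∫⁻ k₀ : ℝ³, ∫⁻ k, ENNReal.ofReal
          ((freeSymbol m μ k₀ (Function.update k i (k i - k₀)))⁻¹ ^ 2 * ‖ξ k‖ ^ 2) := by
        rw [Measure.volume_eq_prod, lintegral_prod _ (by unfold freeSymbol; fun_prop)]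
        refine lintegral_congr fun k₀ => ?_
        conv_rhs => rw [← lintegral_comp_update_add_apply_self _ i k₀]
        simp
    _ = ∫⁻ k, ∫⁻ k₀ : ℝ³, ENNReal.ofReal
          ((freeSymbol m μ k₀ (Function.update k i (k i - k₀)))⁻¹ ^ 2 * ‖ξ k‖ ^ 2) :=
        lintegral_lintegral_swap (by unfold freeSymbol; fun_prop)
    _ = ∫⁻ k, ENNReal.ofReal (π ^ 2 * (2 * m / (m + 1)) ^ ((3 : ℝ) / 2)) *
          ENNReal.ofReal (‖ξ k‖ ^ 2 * (√(reducedSymbol i m μ k))⁻¹) := by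
        refine lintegral_congr fun k => ?_
        rw [lintegral_congr fun k₀ => ENNReal.ofReal_mul (sq_nonneg _),
          lintegral_mul_const' _ _ ENNReal.ofReal_ne_top,
          lintegral_inv_freeSymbol_update_sq i hm hμ, ← ENNReal.ofReal_mul (by positivity),
          ← ENNReal.ofReal_mul (by positivity)]
        congr 1
        ring
    _ = _ := lintegral_const_mul' _ _ ENNReal.ofReal_ne_top

lemma lintegral_norm_sq_mul_inv_sqrt_reducedSymbol_le {ι : Type*} [Fintype ι] [DecidableEq ι]
    [MeasurableSpace (ι → ℝ³)] (i : ι) {m μ : ℝ} (hm : 0 < m) (hμ : 0 < μ) (ξ : (ι → ℝ³) → ℂ)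
    (ν : Measure (ι → ℝ³)) :
    ∫⁻ k, ENNReal.ofReal (‖ξ k‖ ^ 2 * (√(reducedSymbol i m μ k))⁻¹) ∂ν ≤
      ENNReal.ofReal (√μ)⁻¹ * ∫⁻ k, ENNReal.ofReal (‖ξ k‖ ^ 2) ∂ν := by
  rw [← lintegral_const_mul' _ _ ENNReal.ofReal_ne_top]
  refine lintegral_mono fun k => ?_
  rw [← ENNReal.ofReal_mul (by positivity), mul_comm]
  gcongr
  exact le_reducedSymbol i hm μ k

/-- `L²` norm of `G_μ ξ_i`: with `G_μ(k₀,k⃗) = ((1/2m)k₀² + (1/2)k⃗² + μ)⁻¹`,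
`‖G_μ ξ_i‖² = π² (2m/(m+1))^{3/2} ∫ |ξ̂(k_i,k̂_i)|² (k_i²/(2(1+m)) + (1/2)k̂_i² + μ)^{-1/2}`,
and in particular `‖G_μ ξ_i‖² ≤ π² (2m/(m+1))^{3/2} μ^{-1/2} ‖ξ‖²`. -/
theorem stmt13 (N : ℕ) (i : Fin N) (m μ : ℝ) (hm : 0 < m) (hμ : 0 < μ)
    (ξ : (Fin N → EuclideanSpace ℝ (Fin 3)) → ℂ) (hξ : Measurable ξ) :
    (∫⁻ p : EuclideanSpace ℝ (Fin 3) × (Fin N → EuclideanSpace ℝ (Fin 3)),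
        ENNReal.ofReal ((((1 / (2 * m)) * ‖p.1‖ ^ 2 + (1 / 2) * ∑ j, ‖p.2 j‖ ^ 2 + μ)⁻¹) ^ 2 *
          ‖ξ (Function.update p.2 i (p.1 + p.2 i))‖ ^ 2)) =
      ENNReal.ofReal (Real.pi ^ 2 * (2 * m / (m + 1)) ^ ((3 : ℝ) / 2)) *
        ∫⁻ k : Fin N → EuclideanSpace ℝ (Fin 3),
          ENNReal.ofReal (‖ξ k‖ ^ 2 *
            (Real.sqrt (‖k i‖ ^ 2 / (2 * (1 + m)) +
              (1 / 2) * ∑ j ∈ Finset.univ.erase i, ‖k j‖ ^ 2 + μ))⁻¹) ∧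
    (∫⁻ p : EuclideanSpace ℝ (Fin 3) × (Fin N → EuclideanSpace ℝ (Fin 3)),
        ENNReal.ofReal ((((1 / (2 * m)) * ‖p.1‖ ^ 2 + (1 / 2) * ∑ j, ‖p.2 j‖ ^ 2 + μ)⁻¹) ^ 2 *
          ‖ξ (Function.update p.2 i (p.1 + p.2 i))‖ ^ 2)) ≤
      ENNReal.ofReal (Real.pi ^ 2 * (2 * m / (m + 1)) ^ ((3 : ℝ) / 2) * (Real.sqrt μ)⁻¹) *
        ∫⁻ k : Fin N → EuclideanSpace ℝ (Fin 3), ENNReal.ofReal (‖ξ k‖ ^ 2) := by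
  have hnorm := lintegral_inv_freeSymbol_sq_mul_norm_sq i hm hμ hξ
  refine ⟨hnorm, ?_⟩
  calc _ = _ := hnorm
    _ ≤ _ := mul_le_mul_right
        (lintegral_norm_sq_mul_inv_sqrt_reducedSymbol_le i hm hμ ξ volume) _
    _ = _ := by rw [← mul_assoc, ← ENNReal.ofReal_mul (by positivity)]
end
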